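/- arXiv:1001.2936 — 4 statements merged into one kernel-verified Lean document; each statement's English description precedes it below -/
import Mathlib

section
/- Let n and x be even with n > x > 3, gcd(n,x) = 2, and x^2 ≡ 2 (mod n), and let δ = δ_{n,x}. Then for every even element 2i of Z/nZ, setting a = -2i and b = 2ix + 1, the identities δ(k + 2i) = δ^b(k) + a and δ^{2i}(k) + 1 = δ^a(k + b) hold for all k in Z/nZ. -/
/-!
Since `n` is even, the parity of a residue is well defined, and since `x` is even `δ` preserves
it. Hence `δ^m` is multiplication by `(-1)^m` on even residues and translation by `m x` on odd
ones. In each parity class both identities then reduce to `x ^ 2 = 2` in `ZMod n`.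
-/

def delta (n x : ℕ) : ZMod n → ZMod n :=
  fun k => if Even k.val then -k else k + (x : ZMod n)

namespace ZMod

variable {n : ℕ} [NeZero n]

theorem even_val_iff_castHom_eq_zero (h : 2 ∣ n) (k : ZMod n) :
    Even k.val ↔ castHom h (ZMod 2) k = 0 := by
  rw [castHom_apply, ← natCast_val, natCast_eq_zero_iff, even_iff_two_dvd]

theorem even_val_add_iff (h : 2 ∣ n) (a b : ZMod n) :
    Even (a + b).val ↔ (Even a.val ↔ Even b.val) := by
  simp only [even_val_iff_castHom_eq_zero h, map_add]
  generalize castHom h (ZMod 2) a = u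
  generalize castHom h (ZMod 2) b = v
  revert u v; decide

theorem even_val_neg_iff (h : 2 ∣ n) (a : ZMod n) : Even (-a).val ↔ Even a.val := by
  simp only [even_val_iff_castHom_eq_zero h, map_neg, neg_eq_zero]

theorem even_val_two_mul (h : 2 ∣ n) (a : ZMod n) : Even (2 * a).val := by
  simp only [even_val_iff_castHom_eq_zero h, map_mul, map_ofNat]
  rw [show (2 : ZMod 2) = 0 by decide, zero_mul]

theorem even_val_mul_natCast (h : 2 ∣ n) (a : ZMod n) {m : ℕ} (hm : Even m) :
    Even (a * m).val := by
  simp only [even_val_iff_castHom_eq_zero h, map_mul, map_natCast,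
    (natCast_eq_zero_iff _ _).2 hm.two_dvd, mul_zero]

theorem not_even_val_one (h : 2 ∣ n) : ¬ Even (1 : ZMod n).val := by
  simp only [even_val_iff_castHom_eq_zero h, map_one, one_ne_zero, not_false_eq_true]

end ZMod

open ZMod

section

variable {n x : ℕ}

theorem delta_of_even_val {k : ZMod n} (hk : Even k.val) : delta n x k = -k := if_pos hk

theorem delta_of_not_even_val {k : ZMod n} (hk : ¬Even k.val) : delta n x k = k + x := if_neg hk

variable [NeZero n]

theorem delta_iterate_of_even_val (h : 2 ∣ n) {k : ZMod n} (hk : Even k.val) (m : ℕ) :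
    (delta n x)^[m] k = (-1) ^ m * k := by
  induction m with
  | zero => simp
  | succ m ih =>
    have hm : Even ((-1) ^ m * k).val := by
      rcases neg_one_pow_eq_or (ZMod n) m with h1 | h1 <;>
        simpa [h1, even_val_neg_iff h] using hk
    rw [Function.iterate_succ_apply', ih, delta_of_even_val hm, pow_succ]
    ring

theorem delta_iterate_of_not_even_val (h : 2 ∣ n) (hx : Even x) {k : ZMod n} (hk : ¬Even k.val)
    (m : ℕ) : (delta n x)^[m] k = k + m * x := by
  induction m with
  | zero => simp
  | succ m ih =>
    have hm : ¬Even (k + m * x).val := by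
      rwa [even_val_add_iff h, iff_true_right (even_val_mul_natCast h _ hx)]
    rw [Function.iterate_succ_apply', ih, delta_of_not_even_val hm]
    push_cast
    ring

end

theorem stmt_9_general (n x : ℕ) (hn : Even n) (hx : Even x)
    (hxn : x < n)
    (hsq : x ^ 2 ≡ 2 [MOD n]) (i : ZMod n) :
    (∀ k : ZMod n,
      delta n x (k + 2 * i) =
        (delta n x)^[((2 * i * (x : ZMod n) + 1 : ZMod n)).val] k + (-(2 * i))) ∧
    (∀ k : ZMod n,
      (delta n x)^[(2 * i).val] k + 1 =
        (delta n x)^[((-(2 * i) : ZMod n)).val] (k + (2 * i * (x : ZMod n) + 1))) := by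
  have : NeZero n := ⟨by omega⟩
  have h2 := hn.two_dvd
  have hx2 : (x : ZMod n) ^ 2 = 2 := by exact_mod_cast (natCast_eq_natCast_iff _ _ _).mpr hsq
  have hs : Even (2 * i).val := even_val_two_mul h2 i
  have hneg : Even (-(2 * i)).val := (even_val_neg_iff h2 _).mpr hs
  have hb : ¬Even (2 * i * x + 1).val := by
    simpa [even_val_add_iff h2, even_val_mul_natCast h2 _ hx] using not_even_val_one h2
  refine ⟨fun k => ?_, fun k => ?_⟩ <;> by_cases hk : Even k.val
  · rw [delta_of_even_val ((even_val_add_iff h2 _ _).mpr (iff_of_true hk hs)),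
      delta_iterate_of_even_val h2 hk, (Nat.not_even_iff_odd.mp hb).neg_one_pow]
    ring
  · rw [delta_of_not_even_val (by rwa [even_val_add_iff h2, iff_true_right hs]),
      delta_iterate_of_not_even_val h2 hx hk, natCast_zmod_val]
    linear_combination (-(2 * i)) * hx2
  · rw [delta_iterate_of_even_val h2 hk, hs.neg_one_pow,
      delta_iterate_of_not_even_val h2 hx
        (by rwa [even_val_add_iff h2, iff_false_right hb, not_not]), natCast_zmod_val]
    ring
  · rw [delta_iterate_of_not_even_val h2 hx hk, natCast_zmod_val,
      delta_iterate_of_even_val h2 ((even_val_add_iff h2 _ _).mpr (iff_of_false hk hb)),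
      hneg.neg_one_pow]
    ring

theorem stmt_9 (n x : ℕ) (hn : Even n) (hx : Even x)
    (h3 : 3 < x) (hxn : x < n) (hg : Nat.gcd n x = 2)
    (hsq : x ^ 2 ≡ 2 [MOD n]) (i : ZMod n) :
    (∀ k : ZMod n,
      delta n x (k + 2 * i) =
        (delta n x)^[((2 * i * (x : ZMod n) + 1 : ZMod n)).val] k + (-(2 * i))) ∧
    (∀ k : ZMod n,
      (delta n x)^[(2 * i).val] k + 1 =
        (delta n x)^[((-(2 * i) : ZMod n)).val] (k + (2 * i * (x : ZMod n) + 1))) :=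
  stmt_9_general n x hn hx hxn hsq i
end

section
/- Let n and x be even with n > x > 3, gcd(n,x) = 2, and x^2 ≡ 2 (mod n), and let δ = δ_{n,x}. Then for every odd element 2i+1 of Z/nZ, setting a = 2i + x + 1 and b = -(2i+1)x - 1 = -2ix - x - 1, the identities δ(k + (2i+1)) = δ^b(-k) + a and δ^{2i+1}(k) + 1 = δ^a(-k + b) hold for all k in Z/nZ. -/
lemma even_val_iff {n : ℕ} [NeZero n] (h : 2 ∣ n) (k : ZMod n) :
    Even k.val ↔ ZMod.castHom h (ZMod 2) k = 0 := by
  rw [ZMod.castHom_apply, ZMod.cast_eq_val (R := ZMod 2), ZMod.natCast_eq_zero_iff]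
  exact even_iff_two_dvd

lemma delta_iter (n x : ℕ) [NeZero n] (h2 : 2 ∣ n) (hx : 2 ∣ x) (m : ℕ) (k : ZMod n) :
    (delta n x)^[m] k = if Even k.val then (-1)^m * k else k + (m : ZMod n) * x := by
  have hx2 : ((x : ℕ) : ZMod 2) = 0 := by
    rw [ZMod.natCast_eq_zero_iff]; exact hx
  induction m with
  | zero => split <;> simp
  | succ m ih =>
    rw [Function.iterate_succ_apply', ih, delta]
    by_cases hk : Even k.val
    · have hk' := (even_val_iff h2 k).mp hk
      have : Even ((-1 : ZMod n)^m * k).val := by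
        rw [even_val_iff h2]
        simp [map_mul, hk']
      simp only [hk, if_true, this, if_true]
      rw [pow_succ]
      ring
    · have hk' : ZMod.castHom h2 (ZMod 2) k ≠ 0 := fun h => hk ((even_val_iff h2 k).mpr h)
      have : ¬ Even (k + (m : ZMod n) * x).val := by
        rw [even_val_iff h2]
        simp only [map_add, map_mul, map_natCast, hx2, mul_zero, add_zero]
        exact hk'
      simp only [hk, if_false, this, if_false]
      push_cast
      ring

theorem stmt_10 (n x : ℕ) (hn : Even n) (hx : Even x)
    (h3 : 3 < x) (hxn : x < n) (hg : Nat.gcd n x = 2)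
    (hsq : x ^ 2 ≡ 2 [MOD n]) (i : ZMod n) :
    (∀ k : ZMod n,
      delta n x (k + (2 * i + 1)) =
        (delta n x)^[((-(2 * i + 1) * (x : ZMod n) - 1 : ZMod n)).val] (-k) +
          (2 * i + (x : ZMod n) + 1)) ∧
    (∀ k : ZMod n,
      (delta n x)^[(2 * i + 1).val] k + 1 =
        (delta n x)^[((2 * i + (x : ZMod n) + 1 : ZMod n)).val]
          (-k + (-(2 * i + 1) * (x : ZMod n) - 1))) := by
  haveI : NeZero n := ⟨by omega⟩
  have h2 : 2 ∣ n := hn.two_dvd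
  have hx2 : 2 ∣ x := hx.two_dvd
  set φ := ZMod.castHom h2 (ZMod 2) with hφ
  have hx20 : ((x : ℕ) : ZMod 2) = 0 := by
    rw [ZMod.natCast_eq_zero_iff]; exact hx2
  have h20 : (2 : ZMod 2) = 0 := by decide
  have hone : ∀ z : ZMod 2, z ≠ 0 → z = 1 := by decide
  have valcast : ∀ z : ZMod n, ((z.val : ℕ) : ZMod n) = z := fun z => by
    rw [ZMod.natCast_val, ZMod.cast_id]
  have hsq' : (x : ZMod n) ^ 2 = 2 := by
    have := (ZMod.natCast_eq_natCast_iff _ _ _).mpr hsq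
    push_cast at this
    exact this
  set o : ZMod n := 2 * i + 1 with hodef
  set a : ZMod n := 2 * i + (x : ZMod n) + 1 with hadef
  set b : ZMod n := -(2 * i + 1) * (x : ZMod n) - 1 with hbdef
  have hxφ : φ ((x : ℕ) : ZMod n) = 0 := by rw [map_natCast, hx20]
  have ho : φ o = 1 := by
    simp only [hodef, map_add, map_mul, map_one, map_ofNat, h20, zero_mul, zero_add]
  have ha : φ a = 1 := by
    simp only [hadef, map_add, map_mul, map_one, map_ofNat, hxφ, h20, zero_mul, zero_add,
      add_zero]
  have hb : φ b = 1 := by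
    simp only [hbdef, map_sub, map_neg, map_add, map_mul, map_one, map_ofNat, hxφ, h20,
      zero_mul, mul_zero, add_zero, neg_zero, zero_sub]
    decide
  have hbodd : Odd b.val := by
    rw [Nat.odd_iff, ← Nat.not_even_iff]
    intro h
    rw [even_val_iff h2] at h
    rw [h] at hb; exact absurd hb.symm (by decide)
  have haodd : Odd a.val := by
    rw [Nat.odd_iff, ← Nat.not_even_iff]
    intro h
    rw [even_val_iff h2] at h
    rw [h] at ha; exact absurd ha.symm (by decide)
  have hoodd : Odd o.val := by
    rw [Nat.odd_iff, ← Nat.not_even_iff]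
    intro h
    rw [even_val_iff h2] at h
    rw [h] at ho; exact absurd ho.symm (by decide)
  constructor
  · intro k
    rw [delta_iter n x h2 hx2, delta]
    by_cases hk : φ k = 0
    · have h1 : ¬ Even (k + o).val := by
        rw [even_val_iff h2, map_add, hk, ho, zero_add]; decide
      have h2' : Even (-k).val := by
        rw [even_val_iff h2, map_neg, hk, neg_zero]
      rw [if_neg h1, if_pos h2', hbodd.neg_one_pow]
      ring
    · have hk1 : φ k = 1 := hone _ hk
      have h1 : Even (k + o).val := by
        rw [even_val_iff h2, map_add, hk1, ho]; decide
      have h2' : ¬ Even (-k).val := by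
        rw [even_val_iff h2, map_neg, hk1]; decide
      rw [if_pos h1, if_neg h2', valcast]
      rw [hodef, hbdef, hadef]
      linear_combination (2 * i + 1) * hsq'
  · intro k
    rw [delta_iter n x h2 hx2, delta_iter n x h2 hx2]
    by_cases hk : φ k = 0
    · have h1 : Even k.val := (even_val_iff h2 k).mpr hk
      have h2' : ¬ Even (-k + b).val := by
        rw [even_val_iff h2, map_add, map_neg, hk, hb, neg_zero, zero_add]; decide
      rw [if_pos h1, if_neg h2', hoodd.neg_one_pow, valcast]
      rw [hbdef, hadef]
      linear_combination -hsq'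
    · have hk1 : φ k = 1 := hone _ hk
      have h1 : ¬ Even k.val := by
        rw [even_val_iff h2, hk1]; decide
      have h2' : Even (-k + b).val := by
        rw [even_val_iff h2, map_add, map_neg, hk1, hb]; decide
      rw [if_neg h1, if_pos h2', haodd.neg_one_pow, valcast]
      ring
end

section
/- Let n ≥ 3 and let δ be a permutation of Z/nZ with δ(0) = 0 and δ^{-1}(-k) = -δ(k) for all k, such that δ has order 2. Suppose there exist a, b in Z/nZ with either (δ(k+1) = δ^b(k) + a and δ(k) + 1 = δ^a(k + b) for all k) or (δ(k+1) = δ^b(-k) + a and δ(k) + 1 = δ^a(-k + b) for all k), where a = δ(1). If a is even, then δ(k) is even for all k, a contradiction to δ being a bijection; hence δ(1) must be odd. -/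
/-!
If `a = δ 1` had even value, then `δ ^ a = 1` because `δ` is an involution, so the second
functional equation reads `δ k + 1 = ±k + b`. Evaluating at `0` gives `b = 1`, hence `δ = id`
or `δ = -id`. The first is not of order `2`; in the second, the first functional equation at
`k = 1` gives `-2 = 0`, so again `δ = -id = id`.
-/

theorem pow_eq_one_of_orderOf_eq_two {G : Type*} [Monoid G] {g : G} (hg : orderOf g = 2)
    {m : ℕ} (hm : Even m) : g ^ m = 1 :=
  orderOf_dvd_iff_pow_eq_one.mp (hg ▸ hm.two_dvd)

theorem eq_one_and_eq_of_forall_add_one_eq_add {R : Type*} [AddRightCancelMonoid R] [One R]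
    {f g : R → R} {b : R} (hf : f 0 = 0) (hg : g 0 = 0) (h : ∀ k, f k + 1 = g k + b) :
    b = 1 ∧ f = g := by
  have hb : b = 1 := by simpa [hf, hg] using (h 0).symm
  subst hb
  exact ⟨rfl, funext fun k => add_right_cancel (h k)⟩

theorem Equiv.Perm.eq_one_of_coe_eq_neg {R : Type*} [CommRing R] {δ : Equiv.Perm R}
    (hneg : ⇑δ = Neg.neg) (h : δ (1 + 1) = δ (-1) + δ 1) : δ = 1 := by
  have htwo : (2 : R) = 0 := by
    simp only [hneg, neg_neg, add_neg_cancel] at h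
    linear_combination -h
  ext k
  simp only [hneg, Equiv.Perm.coe_one, id_eq]
  linear_combination (-k) * htwo

theorem stmt_13_general (n : ℕ) (δ : Equiv.Perm (ZMod n))
    (h0 : δ 0 = 0)
    (hord : orderOf δ = 2) (b : ZMod n)
    (heq :
      (∀ k : ZMod n,
        δ (k + 1) = (δ ^ b.val) k + δ 1 ∧
        δ k + 1 = (δ ^ (δ 1).val) (k + b)) ∨
      (∀ k : ZMod n,
        δ (k + 1) = (δ ^ b.val) (-k) + δ 1 ∧
        δ k + 1 = (δ ^ (δ 1).val) (-k + b))) :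
    Odd (δ 1).val := by
  by_contra hodd
  have hpow : δ ^ (δ 1).val = 1 :=
    pow_eq_one_of_orderOf_eq_two hord (Nat.not_odd_iff_even.mp hodd)
  have hδ : δ ≠ 1 := by
    rintro rfl
    simp at hord
  rcases heq with h | h
  · obtain ⟨-, hid⟩ := eq_one_and_eq_of_forall_add_one_eq_add (g := id) h0 rfl fun k => by
      simpa [hpow] using (h k).2
    exact hδ (Equiv.ext (congrFun hid))
  · obtain ⟨rfl, hneg⟩ := eq_one_and_eq_of_forall_add_one_eq_add (g := Neg.neg) h0 neg_zero
      fun k => by simpa [hpow] using (h k).2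
    have : Nontrivial (ZMod n) :=
      not_subsingleton_iff_nontrivial.mp fun _ => hδ (Subsingleton.elim _ _)
    have hval : (1 : ZMod n).val = 1 := ZMod.val_one'' (ZMod.nontrivial_iff.mp this)
    refine hδ (δ.eq_one_of_coe_eq_neg hneg ?_)
    simpa [hval] using (h 1).1

theorem stmt_13 (n : ℕ) (hn : 3 ≤ n) (δ : Equiv.Perm (ZMod n))
    (h0 : δ 0 = 0) (hanti : ∀ k : ZMod n, δ⁻¹ (-k) = -(δ k))
    (hord : orderOf δ = 2) (b : ZMod n)
    (heq :
      (∀ k : ZMod n,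
        δ (k + 1) = (δ ^ b.val) k + δ 1 ∧
        δ k + 1 = (δ ^ (δ 1).val) (k + b)) ∨
      (∀ k : ZMod n,
        δ (k + 1) = (δ ^ b.val) (-k) + δ 1 ∧
        δ k + 1 = (δ ^ (δ 1).val) (-k + b))) :
    Odd (δ 1).val :=
  stmt_13_general n δ h0 hord b heq
end

section
/- Let δ be a permutation of Z/nZ satisfying δ^{-1}(-k) = -δ(k) for all k in Z/nZ. Then for every orbit O of the cyclic group generated by δ acting on Z/nZ, the number of elements k in O with δ^m(-k) = k (for any fixed integer m) is at most 2 if |O| is even, and at most 1 if |O| is odd. -/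
/-!
Write `τ k = δ^m (-k)`. The antisymmetry of `δ` says that negation conjugates `δ` to `δ⁻¹`,
hence so does `τ`: `τ δ^s = δ^(-s) τ`. If `x` and `δ^s x` are both fixed by `τ`, then
`δ^s x = τ (δ^s x) = δ^(-s) x`, so `δ^(2s) x = x` and the period `p` of the orbit divides
`2s`. Thus `δ^s x` is `x` or, when `p` is even, `δ^(p/2) x`: at most two fixed points, and
at most one when `p` is odd.
-/

open MulAction

theorem Int.dvd_or_dvd_sub_div_two_of_dvd_two_mul {p s : ℤ} (h : p ∣ 2 * s) :
    p ∣ s ∨ p ∣ s - p / 2 := by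
  obtain ⟨c, hc⟩ := h
  rcases Int.even_or_odd' c with ⟨d, rfl | rfl⟩
  · exact Or.inl ⟨d, by linarith⟩
  · have hp : p = 2 * (s - p * d) := by linarith
    exact Or.inr ⟨d, by omega⟩

theorem Int.dvd_of_odd_of_dvd_two_mul {p : ℕ} {s : ℤ} (hp : Odd p) (h : (p : ℤ) ∣ 2 * s) :
    (p : ℤ) ∣ s :=
  (Nat.isCoprime_iff_coprime.2 hp.coprime_two_right).dvd_of_dvd_mul_left (by exact_mod_cast h)

theorem conj_mul_self_zpow_eq_inv {G : Type*} [Group G] {g ν : G} (hν : ν * g * ν⁻¹ = g⁻¹)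
    (m : ℤ) : (g ^ m * ν) * g * (g ^ m * ν)⁻¹ = g⁻¹ :=
  calc (g ^ m * ν) * g * (g ^ m * ν)⁻¹ = g ^ m * (ν * g * ν⁻¹) * (g ^ m)⁻¹ := by group
    _ = g⁻¹ := by rw [hν]; group

namespace MulAction

variable {G α : Type*} [Group G] [MulAction G α]

theorem zpow_smul_eq_zpow_smul_iff_period_dvd {g : G} {a : α} {i j : ℤ} :
    g ^ i • a = g ^ j • a ↔ (period g a : ℤ) ∣ i - j := by
  rw [← zpow_smul_eq_iff_period_dvd, ← neg_add_eq_sub, zpow_add, mul_smul, zpow_neg,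
    inv_smul_eq_iff]

theorem ncard_range_zpow_smul (g : G) (a : α) :
    (Set.range fun j : ℤ => g ^ j • a).ncard = period g a := by
  have horbit : (Set.range fun j : ℤ => g ^ j • a) = orbit (Subgroup.zpowers g) a := by
    ext y
    simp only [Set.mem_range, mem_orbit_iff, Subgroup.exists_zpowers]
    rfl
  rw [horbit, ← Nat.card_coe_set_eq, Nat.card_congr (orbitZPowersEquiv g a), Nat.card_zmod,
    period_eq_minimalPeriod]

variable {g τ : G} (hτ : τ * g * τ⁻¹ = g⁻¹) {a : α}
include hτ

theorem period_dvd_two_mul_sub_of_smul_fixed {t u : ℤ} (ht : τ • g ^ t • a = g ^ t • a)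
    (hu : τ • g ^ u • a = g ^ u • a) : (period g a : ℤ) ∣ 2 * (u - t) := by
  have hconj : τ * g ^ (u - t) * τ⁻¹ = g ^ (t - u) := by
    rw [← conj_zpow, hτ, inv_zpow', neg_sub]
  have hreflect : τ • g ^ u • a = g ^ (2 * t - u) • a :=
    calc τ • g ^ u • a = (τ * g ^ (u - t) * τ⁻¹) • τ • g ^ t • a := by
          simp only [smul_smul]
          group
      _ = g ^ (2 * t - u) • a := by rw [hconj, ht, smul_smul, ← zpow_add]; ring_nf
  rw [hu, zpow_smul_eq_zpow_smul_iff_period_dvd] at hreflect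
  convert hreflect using 1
  ring

theorem fixed_mem_zpow_orbit_subset_pair {t : ℤ} (ht : τ • g ^ t • a = g ^ t • a) :
    {y | (∃ j : ℤ, g ^ j • a = y) ∧ τ • y = y} ⊆
      {g ^ t • a, g ^ (t + (period g a : ℤ) / 2) • a} := by
  rintro _ ⟨⟨u, rfl⟩, hu⟩
  rcases Int.dvd_or_dvd_sub_div_two_of_dvd_two_mul
    (period_dvd_two_mul_sub_of_smul_fixed hτ ht hu) with h | h
  · exact Or.inl (zpow_smul_eq_zpow_smul_iff_period_dvd.2 h)
  · exact Or.inr (zpow_smul_eq_zpow_smul_iff_period_dvd.2 (by rwa [← sub_sub]))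

theorem fixed_mem_zpow_orbit_subset_singleton_of_odd (hodd : Odd (period g a)) {t : ℤ}
    (ht : τ • g ^ t • a = g ^ t • a) :
    {y | (∃ j : ℤ, g ^ j • a = y) ∧ τ • y = y} ⊆ {g ^ t • a} := by
  rintro _ ⟨⟨u, rfl⟩, hu⟩
  exact zpow_smul_eq_zpow_smul_iff_period_dvd.2
    (Int.dvd_of_odd_of_dvd_two_mul hodd (period_dvd_two_mul_sub_of_smul_fixed hτ ht hu))

variable (a)

theorem ncard_fixed_mem_zpow_orbit_le_two :
    {y | (∃ j : ℤ, g ^ j • a = y) ∧ τ • y = y}.ncard ≤ 2 := by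
  rcases Set.eq_empty_or_nonempty {y | (∃ j : ℤ, g ^ j • a = y) ∧ τ • y = y} with
    hempty | ⟨_, ⟨t, rfl⟩, ht⟩
  · simp [hempty]
  calc _ ≤ ({g ^ t • a, g ^ (t + (period g a : ℤ) / 2) • a} : Set α).ncard :=
        Set.ncard_le_ncard (fixed_mem_zpow_orbit_subset_pair hτ ht) (Set.toFinite _)
    _ ≤ 2 := (Set.ncard_insert_le _ _).trans_eq (by rw [Set.ncard_singleton])

theorem ncard_fixed_mem_zpow_orbit_le_one_of_odd (hodd : Odd (period g a)) :
    {y | (∃ j : ℤ, g ^ j • a = y) ∧ τ • y = y}.ncard ≤ 1 := by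
  rcases Set.eq_empty_or_nonempty {y | (∃ j : ℤ, g ^ j • a = y) ∧ τ • y = y} with
    hempty | ⟨_, ⟨t, rfl⟩, ht⟩
  · simp [hempty]
  calc _ ≤ ({g ^ t • a} : Set α).ncard :=
        Set.ncard_le_ncard (fixed_mem_zpow_orbit_subset_singleton_of_odd hτ hodd ht)
          (Set.toFinite _)
    _ = 1 := Set.ncard_singleton _

end MulAction

theorem stmt_16_general (n : ℕ) (δ : Equiv.Perm (ZMod n))
    (hanti : ∀ k : ZMod n, δ⁻¹ (-k) = -(δ k)) (m : ℤ) (a : ZMod n) :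
    (Even (Set.ncard {k : ZMod n | ∃ j : ℤ, (δ ^ j) a = k}) →
      Set.ncard {k : ZMod n | (∃ j : ℤ, (δ ^ j) a = k) ∧ (δ ^ m) (-k) = k} ≤ 2) ∧
    (Odd (Set.ncard {k : ZMod n | ∃ j : ℤ, (δ ^ j) a = k}) →
      Set.ncard {k : ZMod n | (∃ j : ℤ, (δ ^ j) a = k) ∧ (δ ^ m) (-k) = k} ≤ 1) := by
  have hneg : Equiv.neg (ZMod n) * δ * (Equiv.neg (ZMod n))⁻¹ = δ⁻¹ := by
    ext k
    simpa using (hanti (-k)).symm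
  have hτ := conj_mul_self_zpow_eq_inv hneg m
  refine ⟨fun _ => ncard_fixed_mem_zpow_orbit_le_two hτ a, fun hodd => ?_⟩
  change Odd (Set.range fun j : ℤ => δ ^ j • a).ncard at hodd
  rw [ncard_range_zpow_smul] at hodd
  exact ncard_fixed_mem_zpow_orbit_le_one_of_odd hτ a hodd

theorem stmt_16 (n : ℕ) (hn : 0 < n) (δ : Equiv.Perm (ZMod n))
    (hanti : ∀ k : ZMod n, δ⁻¹ (-k) = -(δ k)) (m : ℤ) (a : ZMod n) :
    (Even (Set.ncard {k : ZMod n | ∃ j : ℤ, (δ ^ j) a = k}) →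
      Set.ncard {k : ZMod n | (∃ j : ℤ, (δ ^ j) a = k) ∧ (δ ^ m) (-k) = k} ≤ 2) ∧
    (Odd (Set.ncard {k : ZMod n | ∃ j : ℤ, (δ ^ j) a = k}) →
      Set.ncard {k : ZMod n | (∃ j : ℤ, (δ ^ j) a = k) ∧ (δ ^ m) (-k) = k} ≤ 1) :=
  stmt_16_general n δ hanti m a
end
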